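/- Zero-infinity law for the first moment, case 1 + ρ ln μ(0) > 0: Assume Γ(0) < Γ(1) and, with ρ > 0, that 1 + ρ ln μ(0) > 0. Then for any ρ-admissible scaling L : ℕ → ℕ, the expected number of isolated nodes E[I_n(L_n)] in the homogeneous binary MAG model M(n;L_n) converges, as n → ∞, to ∞ if 1 + ρ ln Γ(0) < 0, and to 0 if 1 + ρ ln Γ(0) > 0. -/

import Mathlib

open MeasureTheory Filter

/-- Bernoulli measure on `Bool` with parameter `p` = probability of `true`. -/
noncomputable def bern (p : ℝ) : Measure Bool :=
  (Real.toNNReal p) • Measure.dirac true + (Real.toNNReal (1 - p)) • Measure.dirac false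

/-- Uniform distribution on `[0,1]`. -/
noncomputable def unif01 : Measure ℝ := MeasureTheory.volume.restrict (Set.Icc (0:ℝ) 1)

/-- The probability space of the homogeneous binary MAG model `M(n;L)`:
i.i.d. Bernoulli attribute bits and, independently, i.i.d. Uniform(0,1) variables. -/
noncomputable def magMeasure (n L : ℕ) (p : ℝ) :
    Measure ((Fin n → Fin L → Bool) × (Fin n × Fin n → ℝ)) :=
  (Measure.pi fun _ : Fin n => Measure.pi fun _ : Fin L => bern p).prod
    (Measure.pi fun _ : Fin n × Fin n => unif01)

/-- `Q_L(a,b) = ∏_{ℓ} q(a_ℓ, b_ℓ)`. -/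
def QL {L : ℕ} (q : Bool → Bool → ℝ) (a b : Fin L → Bool) : ℝ :=
  ∏ ℓ : Fin L, q (a ℓ) (b ℓ)

/-- Distinct nodes `u, v` are adjacent iff `U(u,v) ≤ Q_L(A(u),A(v))`, where the uniform
variable attached to the unordered pair `{u,v}` is the one indexed by `(min u v, max u v)`. -/
def Adj {n L : ℕ} (q : Bool → Bool → ℝ)
    (ω : (Fin n → Fin L → Bool) × (Fin n × Fin n → ℝ)) (u v : Fin n) : Prop :=
  u ≠ v ∧ ω.2 (min u v, max u v) ≤ QL q (ω.1 u) (ω.1 v)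

/-- Node `u` is isolated if it is adjacent to no other node. -/
def Isolated {n L : ℕ} (q : Bool → Bool → ℝ)
    (ω : (Fin n → Fin L → Bool) × (Fin n × Fin n → ℝ)) (u : Fin n) : Prop :=
  ∀ v, ¬ Adj q ω u v

/-- `S_L(u)`: the number of attributes exhibited by node `u`. -/
def Scount {n L : ℕ} (ω : (Fin n → Fin L → Bool) × (Fin n × Fin n → ℝ)) (u : Fin n) : ℕ :=
  (Finset.univ.filter fun ℓ : Fin L => ω.1 u ℓ = true).card

open scoped Classical in
/-- `I_n(L)`: the number of isolated nodes. -/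
noncomputable def numIsolated {n L : ℕ} (q : Bool → Bool → ℝ)
    (ω : (Fin n → Fin L → Bool) × (Fin n × Fin n → ℝ)) : ℕ :=
  (Finset.univ.filter fun u : Fin n => Isolated q ω u).card

open scoped Classical in
/-- `I_n^{(k)}(L)`: the number of isolated nodes `u` with `S_L(u) = k`. -/
noncomputable def numIsolatedWith {n L : ℕ} (q : Bool → Bool → ℝ) (k : ℕ)
    (ω : (Fin n → Fin L → Bool) × (Fin n × Fin n → ℝ)) : ℕ :=
  (Finset.univ.filter fun u : Fin n => Isolated q ω u ∧ Scount ω u = k).card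

open scoped Classical in
/-- `ξ^{(k)}(u)`: the indicator that node `u` is isolated and `S_L(u) = k`. -/
noncomputable def xiInd {n L : ℕ} (q : Bool → Bool → ℝ) (k : ℕ)
    (ω : (Fin n → Fin L → Bool) × (Fin n × Fin n → ℝ)) (u : Fin n) : ℝ :=
  if Isolated q ω u ∧ Scount ω u = k then 1 else 0

/-- `Γ(a) = μ(0) q(a,0) + μ(1) q(a,1)`, with `μ(1) = μ1`, `μ(0) = 1 - μ1`. -/
def Gam (μ1 : ℝ) (q : Bool → Bool → ℝ) (a : Bool) : ℝ :=
  (1 - μ1) * q a false + μ1 * q a true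

/-- A scaling `L : ℕ → ℕ` is `ρ`-admissible if `L_n ~ ρ ln n` as `n → ∞`. -/
def Admissible (ρ : ℝ) (L : ℕ → ℕ) : Prop :=
  Asymptotics.IsEquivalent Filter.atTop (fun n => (L n : ℝ)) (fun n => ρ * Real.log n)

/-- `G(ν,μ) = (μ/ν)^ν ((1-μ)/(1-ν))^{1-ν}` (real powers; the conventions at `ν = 0,1`
agree with the continuous extension). -/
noncomputable def Gfun (ν μ : ℝ) : ℝ :=
  (μ / ν) ^ ν * ((1 - μ) / (1 - ν)) ^ (1 - ν)

/-- `Q*_L(a) = E[Q_L(a,A)]`, `A` a vector of `L` i.i.d. Bernoulli(μ1) bits. -/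
noncomputable def Qstar {L : ℕ} (μ1 : ℝ) (q : Bool → Bool → ℝ) (a : Fin L → Bool) : ℝ :=
  ∫ b, QL q a b ∂(Measure.pi fun _ : Fin L => bern μ1)

/-- `Q**_L(a,b) = E[Q_L(a,A) Q_L(b,A)]`. -/
noncomputable def Qstarstar {L : ℕ} (μ1 : ℝ) (q : Bool → Bool → ℝ) (a b : Fin L → Bool) : ℝ :=
  ∫ c, QL q a c * QL q b c ∂(Measure.pi fun _ : Fin L => bern μ1)

/-- `Q̃_L(a,b) = Q*_L(a) + Q*_L(b) − Q**_L(a,b)`. -/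
noncomputable def Qtilde {L : ℕ} (μ1 : ℝ) (q : Bool → Bool → ℝ) (a b : Fin L → Bool) : ℝ :=
  Qstar μ1 q a + Qstar μ1 q b - Qstarstar μ1 q a b

/-!
Conditionally on the attributes, the edge variables at a node are independent, so by linearity
`E[I_n] = n Φ` with `Φ = ∑_b w(b) (1 - ∏_ℓ Γ(b_ℓ))^(n-1)`, `w(b)` the probability of the
attribute vector `b`. As `Γ(0) ≤ Γ(1)`, `Φ` lies between `μ(0)^L (1 - Γ(0)^L)^(n-1)`
(the all-zero attribute vector alone) and `(1 - Γ(0)^L)^(n-1)`.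
For `L_n ~ ρ ln n` one has `n c^(L_n) = n^(1 + ρ ln c + o(1))`. If `1 + ρ ln Γ(0) < 0` then
`n Γ(0)^(L_n) → 0`, so by Bernoulli's inequality `E[I_n] ≥ n μ(0)^(L_n) / 2 → ∞`. If
`1 + ρ ln Γ(0) > 0` then `x_n = n Γ(0)^(L_n) → ∞` polynomially in `n`, and
`E[I_n] ≤ n exp(1 - x_n) → 0`.
-/

open Real Finset

lemma one_sub_mul_le_one_sub_pow_pred {x : ℝ} (hx0 : 0 ≤ x) (hx2 : x ≤ 2) (n : ℕ) :
    1 - n * x ≤ (1 - x) ^ (n - 1) := by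
  have hn : ((n - 1 : ℕ) : ℝ) ≤ n := by exact_mod_cast n.sub_le 1
  have := one_add_mul_le_pow (by linarith : -2 ≤ -x) (n - 1)
  rw [← sub_eq_add_neg] at this
  nlinarith

lemma one_sub_pow_pred_le_exp {x : ℝ} (hx0 : 0 ≤ x) (hx1 : x ≤ 1) (n : ℕ) :
    (1 - x) ^ (n - 1) ≤ exp (1 - n * x) := by
  have hn : (n : ℝ) - 1 ≤ ((n - 1 : ℕ) : ℝ) := by
    rcases n with _ | n <;> simp
  calc (1 - x) ^ (n - 1) ≤ exp (-x) ^ (n - 1) :=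
        pow_le_pow_left₀ (by linarith) (by linarith [add_one_le_exp (-x)]) _
    _ = exp (-((n - 1 : ℕ) * x)) := by rw [← exp_nat_mul]; ring_nf
    _ ≤ exp (1 - n * x) := by gcongr; nlinarith

section Asymptotics

variable {ρ : ℝ} {L : ℕ → ℕ}

lemma Admissible.tendsto_div_log (hL : Admissible ρ L) :
    Tendsto (fun n : ℕ => (L n : ℝ) / log n) atTop (nhds ρ) := by
  have hsmall : (fun n : ℕ => (L n : ℝ) - ρ * log n) =o[atTop] fun n => log n :=
    hL.isLittleO.trans_isBigO (Asymptotics.isBigO_const_mul_self ρ _ _)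
  have := hsmall.tendsto_div_nhds_zero.const_add ρ
  rw [add_zero] at this
  refine this.congr' ?_
  filter_upwards [eventually_gt_atTop 1] with n hn
  have : log n ≠ 0 := (log_pos (by exact_mod_cast hn)).ne'
  field_simp
  ring

lemma natCast_mul_pow_eq_rpow {c : ℝ} (hc : 0 < c) {n : ℕ} (hn : 2 ≤ n) (m : ℕ) :
    (n : ℝ) * c ^ m = (n : ℝ) ^ (1 + m / log n * log c) := by
  have hlog : log n ≠ 0 := (log_pos (by exact_mod_cast hn)).ne'
  have hexp : log n * (1 + m / log n * log c) = log n + log (c ^ m) := by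
    rw [log_pow]; field_simp
  rw [rpow_def_of_pos (by positivity), hexp, exp_add, exp_log (by positivity),
    exp_log (by positivity)]

lemma Admissible.tendsto_exponent (hL : Admissible ρ L) (c : ℝ) :
    Tendsto (fun n : ℕ => 1 + L n / log n * log c) atTop (nhds (1 + ρ * log c)) :=
  tendsto_const_nhds.add (hL.tendsto_div_log.mul_const _)

lemma Admissible.eventually_rpow_le {c a : ℝ} (hL : Admissible ρ L) (hc : 0 < c)
    (ha : a < 1 + ρ * log c) : ∀ᶠ n : ℕ in atTop, (n : ℝ) ^ a ≤ n * c ^ L n := by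
  filter_upwards [(hL.tendsto_exponent c).eventually_const_le ha, eventually_ge_atTop 2]
    with n hexp hn
  rw [natCast_mul_pow_eq_rpow hc hn]
  exact rpow_le_rpow_of_exponent_le (by exact_mod_cast (by omega : 1 ≤ n)) hexp

lemma Admissible.eventually_le_rpow {c a : ℝ} (hL : Admissible ρ L) (hc : 0 < c)
    (ha : 1 + ρ * log c < a) : ∀ᶠ n : ℕ in atTop, (n : ℝ) * c ^ L n ≤ n ^ a := by
  filter_upwards [(hL.tendsto_exponent c).eventually_le_const ha, eventually_ge_atTop 2]
    with n hexp hn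
  rw [natCast_mul_pow_eq_rpow hc hn]
  exact rpow_le_rpow_of_exponent_le (by exact_mod_cast (by omega : 1 ≤ n)) hexp

lemma Admissible.tendsto_natCast_mul_pow_atTop {c : ℝ} (hL : Admissible ρ L) (hc : 0 < c)
    (hk : 0 < 1 + ρ * log c) : Tendsto (fun n : ℕ => (n : ℝ) * c ^ L n) atTop atTop :=
  tendsto_atTop_mono' _ (hL.eventually_rpow_le hc (half_lt_self hk))
    ((tendsto_rpow_atTop (half_pos hk)).comp tendsto_natCast_atTop_atTop)

lemma Admissible.tendsto_natCast_mul_pow_zero {c : ℝ} (hL : Admissible ρ L) (hc : 0 < c)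
    (hk : 1 + ρ * log c < 0) : Tendsto (fun n : ℕ => (n : ℝ) * c ^ L n) atTop (nhds 0) := by
  have hlim : Tendsto (fun n : ℕ => (n : ℝ) ^ (-(-(1 + ρ * log c) / 2))) atTop (nhds 0) :=
    (tendsto_rpow_neg_atTop (by linarith)).comp tendsto_natCast_atTop_atTop
  refine squeeze_zero' (Eventually.of_forall fun n => by positivity) ?_ hlim
  exact hL.eventually_le_rpow hc (by linarith)

lemma Admissible.tendsto_natCast_mul_exp_one_sub_zero {c : ℝ} (hL : Admissible ρ L)
    (hc : 0 < c) (hk : 0 < 1 + ρ * log c) :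
    Tendsto (fun n : ℕ => (n : ℝ) * exp (1 - n * c ^ L n)) atTop (nhds 0) := by
  set a := (1 + ρ * log c) / 2
  have hx := hL.tendsto_natCast_mul_pow_atTop hc hk
  have hlim := ((tendsto_rpow_mul_exp_neg_mul_atTop_nhds_zero a⁻¹ 1 one_pos).comp hx).const_mul
    (exp 1)
  rw [mul_zero] at hlim
  refine squeeze_zero' (Eventually.of_forall fun n => by positivity) ?_ hlim
  filter_upwards [hL.eventually_rpow_le hc (half_lt_self hk)] with n hn
  have hn' : (n : ℝ) ≤ ((n : ℝ) * c ^ L n) ^ a⁻¹ := by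
    calc (n : ℝ) = ((n : ℝ) ^ a) ^ a⁻¹ :=
          (rpow_rpow_inv (by positivity) (by positivity)).symm
      _ ≤ _ := by gcongr
  calc (n : ℝ) * exp (1 - n * c ^ L n) = exp 1 * (n * exp (-1 * (n * c ^ L n))) := by
        rw [sub_eq_add_neg, exp_add]; ring_nf
    _ ≤ _ := by rw [Function.comp_apply]; gcongr

end Asymptotics

lemma sum_prod_mul_prod_erase_eq_sum_mul_pow {ι α R : Type*} [Fintype ι] [DecidableEq ι]
    [Fintype α] [CommSemiring R] (m : α → R) (f : α → α → R) (u : ι) :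
    ∑ a : ι → α, (∏ w, m (a w)) * ∏ v ∈ univ.erase u, f (a u) (a v)
      = ∑ b, m b * (∑ c, m c * f b c) ^ (Fintype.card ι - 1) := by
  have hsplit : ∀ a : ι → α, (∏ w, m (a w)) * ∏ v ∈ univ.erase u, f (a u) (a v)
      = m (a u) * ∏ v : {v // v ≠ u}, m (a v) * f (a u) (a v) := by
    intro a
    rw [← mul_prod_erase univ _ (mem_univ u), mul_assoc, ← prod_mul_distrib,
      prod_subtype (univ.erase u) (p := (· ≠ u)) fun v => by simp]
  simp_rw [hsplit]
  rw [← (Equiv.funSplitAt u α).symm.sum_comp, Fintype.sum_prod_type]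
  refine sum_congr rfl fun b _ => ?_
  have hcard : Fintype.card {v // v ≠ u} = Fintype.card ι - 1 := by
    simp [Fintype.card_subtype_compl]
  have hu : ∀ g, (Equiv.funSplitAt u α).symm (b, g) u = b := by simp
  have hv : ∀ g (v : {v // v ≠ u}), (Equiv.funSplitAt u α).symm (b, g) v = g v := by
    simp +contextual
  simp only [hu, hv]
  rw [← mul_sum, ← Fintype.prod_sum fun (_ : {v // v ≠ u}) c => m c * f b c, prod_const,
    card_univ, hcard]

def bernWeight (p : ℝ) (t : Bool) : ℝ := if t then p else 1 - p

lemma bern_singleton (p : ℝ) (t : Bool) : bern p {t} = ENNReal.ofReal (bernWeight p t) := by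
  cases t <;> simp [bern, bernWeight, ENNReal.ofReal]

instance (p : ℝ) : IsFiniteMeasure (bern p) := by
  unfold bern; infer_instance

instance : IsProbabilityMeasure unif01 :=
  ⟨by simp [unif01, Real.volume_Icc]⟩

instance (n L : ℕ) (p : ℝ) : IsFiniteMeasure (magMeasure n L p) := by
  unfold magMeasure; infer_instance

lemma unif01_Ioi {c : ℝ} (hc0 : 0 ≤ c) :
    unif01 (Set.Ioi c) = ENNReal.ofReal (1 - c) := by
  have : Set.Ioi c ∩ Set.Icc 0 1 = Set.Ioc c 1 := by
    ext x
    simp only [Set.mem_inter_iff, Set.mem_Ioi, Set.mem_Icc, Set.mem_Ioc]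
    exact ⟨fun h => ⟨h.1, h.2.2⟩, fun h => ⟨h.1, hc0.trans h.1.le, h.2⟩⟩
  rw [unif01, Measure.restrict_apply measurableSet_Ioi, this, Real.volume_Ioc]

lemma min_max_injective {α : Type*} [LinearOrder α] (u : α) :
    Function.Injective fun v => (min u v, max u v) := by
  intro v w h
  simp only [Prod.mk.injEq] at h
  rcases le_total u v with huv | hvu <;> rcases le_total u w with huw | hwu <;>
    simp_all

section Weights

variable {L : ℕ} (μ1 : ℝ) (q : Bool → Bool → ℝ)

def attrWeight (b : Fin L → Bool) : ℝ := ∏ ℓ, bernWeight μ1 (b ℓ)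

lemma bernWeight_nonneg {μ1 : ℝ} (h0 : 0 ≤ μ1) (h1 : μ1 ≤ 1) (t : Bool) :
    0 ≤ bernWeight μ1 t := by
  cases t <;> simp [bernWeight] <;> linarith

lemma attrWeight_nonneg {μ1 : ℝ} (h0 : 0 ≤ μ1) (h1 : μ1 ≤ 1) (b : Fin L → Bool) :
    0 ≤ attrWeight μ1 b :=
  prod_nonneg fun _ _ => bernWeight_nonneg h0 h1 _

lemma sum_attrWeight : ∑ c : Fin L → Bool, attrWeight μ1 c = 1 := by
  unfold attrWeight
  rw [← Fintype.prod_sum fun (_ : Fin L) t => bernWeight μ1 t]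
  simp [bernWeight]

lemma sum_attrWeight_mul_QL (b : Fin L → Bool) :
    ∑ c, attrWeight μ1 c * QL q b c = ∏ ℓ, Gam μ1 q (b ℓ) := by
  simp only [attrWeight, QL, ← prod_mul_distrib]
  rw [← Fintype.prod_sum fun ℓ t => bernWeight μ1 t * q (b ℓ) t]
  refine prod_congr rfl fun ℓ _ => ?_
  simp [bernWeight, Gam]
  ring

lemma sum_attrWeight_mul_one_sub_QL (b : Fin L → Bool) :
    ∑ c, attrWeight μ1 c * (1 - QL q b c) = 1 - ∏ ℓ, Gam μ1 q (b ℓ) := by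
  simp only [mul_sub, mul_one, sum_sub_distrib, sum_attrWeight, sum_attrWeight_mul_QL]

end Weights

noncomputable def isolationProb (μ1 : ℝ) (q : Bool → Bool → ℝ) (n L : ℕ) : ℝ :=
  ∑ b : Fin L → Bool, attrWeight μ1 b * (1 - ∏ ℓ, Gam μ1 q (b ℓ)) ^ (n - 1)

section Isolation

variable {n L : ℕ} {μ1 : ℝ} {q : Bool → Bool → ℝ}

lemma QL_nonneg (hq0 : ∀ a b, 0 ≤ q a b) (a b : Fin L → Bool) : 0 ≤ QL q a b :=
  prod_nonneg fun _ _ => hq0 _ _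

lemma QL_le_one (hq0 : ∀ a b, 0 ≤ q a b) (hq1 : ∀ a b, q a b ≤ 1) (a b : Fin L → Bool) :
    QL q a b ≤ 1 :=
  prod_le_one (fun _ _ => hq0 _ _) fun _ _ => hq1 _ _

variable (q) in
lemma measurableSet_isolated (u : Fin n) : MeasurableSet
    {ω : (Fin n → Fin L → Bool) × (Fin n × Fin n → ℝ) | Isolated q ω u} := by
  simp only [Isolated, Adj, not_and, not_le, Set.ofPred_forall]
  exact .iInter fun v => .iInter fun _ => measurableSet_lt
    ((measurable_of_countable fun A : Fin n → Fin L → Bool => QL q (A u) (A v)).comp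
      measurable_fst) ((measurable_pi_apply _).comp measurable_snd)

lemma pi_unif01_isolated (hq0 : ∀ a b, 0 ≤ q a b) (hq1 : ∀ a b, q a b ≤ 1) (u : Fin n)
    (a : Fin n → Fin L → Bool) :
    (Measure.pi fun _ : Fin n × Fin n => unif01) {U | Isolated q (a, U) u}
      = ENNReal.ofReal (∏ v ∈ univ.erase u, (1 - QL q (a u) (a v))) := by
  set e : Fin n → Fin n × Fin n := fun v => (min u v, max u v)
  -- coordinate `i` of `U` is constrained only if it is the slot `e v` of an edge `{u, v}`
  set t : Fin n × Fin n → Set ℝ := fun i => {x | ∀ v ≠ u, e v = i → QL q (a u) (a v) < x}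
  have hpi : {U | Isolated q (a, U) u} = Set.univ.pi t := by
    ext U
    simp only [Isolated, Adj, Set.mem_ofPred_eq, Set.mem_univ_pi, t]
    exact ⟨fun h i v hv hi => hi ▸ not_le.1 fun hle => h v ⟨Ne.symm hv, hle⟩,
      fun h v ⟨huv, hle⟩ => (h (e v) v (Ne.symm huv) rfl).not_ge hle⟩
  have ht : ∀ v ≠ u, t (e v) = Set.Ioi (QL q (a u) (a v)) := fun v hv => by
    ext x
    exact ⟨fun h => h v hv rfl, fun h w _ hw => min_max_injective u hw ▸ h⟩
  have ht' : ∀ i ∉ (univ.erase u).image e, t i = Set.univ := fun i hi => by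
    ext x
    simp only [Set.mem_univ, iff_true]
    exact fun v hv hvi => absurd (mem_image.2 ⟨v, mem_erase.2 ⟨hv, mem_univ _⟩, hvi⟩) hi
  rw [hpi, Measure.pi_pi, ← prod_subset (subset_univ ((univ.erase u).image e))
      fun i _ hi => by rw [ht' i hi, measure_univ],
    prod_image fun v _ w _ h => min_max_injective u h,
    ENNReal.ofReal_prod_of_nonneg fun v _ => sub_nonneg.2 (QL_le_one hq0 hq1 _ _)]
  exact prod_congr rfl fun v hv => by
    rw [ht v (ne_of_mem_erase hv), unif01_Ioi (QL_nonneg hq0 _ _)]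

lemma attrMeasure_singleton (h0 : 0 ≤ μ1) (h1 : μ1 ≤ 1) (a : Fin n → Fin L → Bool) :
    (Measure.pi fun _ : Fin n => Measure.pi fun _ : Fin L => bern μ1) {a}
      = ENNReal.ofReal (∏ w, attrWeight μ1 (a w)) := by
  rw [ENNReal.ofReal_prod_of_nonneg fun w _ => attrWeight_nonneg h0 h1 _, Measure.pi_singleton]
  refine prod_congr rfl fun w _ => ?_
  rw [Measure.pi_singleton, attrWeight,
    ENNReal.ofReal_prod_of_nonneg fun ℓ _ => bernWeight_nonneg h0 h1 _]
  exact prod_congr rfl fun ℓ _ => bern_singleton μ1 _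

lemma magMeasure_isolated (h0 : 0 ≤ μ1) (h1 : μ1 ≤ 1) (hq0 : ∀ a b, 0 ≤ q a b)
    (hq1 : ∀ a b, q a b ≤ 1) (u : Fin n) :
    magMeasure n L μ1 {ω | Isolated q ω u} = ENNReal.ofReal (isolationProb μ1 q n L) := by
  have hfactor := sum_prod_mul_prod_erase_eq_sum_mul_pow (attrWeight (L := L) μ1)
    (fun b c => 1 - QL q b c) u
  simp only [Fintype.card_fin, sum_attrWeight_mul_one_sub_QL] at hfactor
  rw [isolationProb, ← hfactor, magMeasure, Measure.prod_apply (measurableSet_isolated q u),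
    lintegral_fintype, ENNReal.ofReal_sum_of_nonneg fun a _ => mul_nonneg
      (prod_nonneg fun w _ => attrWeight_nonneg h0 h1 _)
      (prod_nonneg fun v _ => sub_nonneg.2 (QL_le_one hq0 hq1 _ _))]
  refine sum_congr rfl fun a _ => ?_
  rw [ENNReal.ofReal_mul (prod_nonneg fun w _ => attrWeight_nonneg h0 h1 _), mul_comm,
    attrMeasure_singleton h0 h1]
  exact congrArg (_ * ·) (pi_unif01_isolated hq0 hq1 u a)

end Isolation

section IsolationProb

variable {n L : ℕ} {μ1 : ℝ} {q : Bool → Bool → ℝ}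
  (h0 : 0 ≤ μ1) (h1 : μ1 ≤ 1) (hq0 : ∀ a b, 0 ≤ q a b) (hq1 : ∀ a b, q a b ≤ 1)

include h0 h1 hq0 in
lemma Gam_nonneg (a : Bool) : 0 ≤ Gam μ1 q a := by
  have := hq0 a false; have := hq0 a true
  unfold Gam; nlinarith

include h0 h1 hq1 in
lemma Gam_le_one (a : Bool) : Gam μ1 q a ≤ 1 := by
  have := hq1 a false; have := hq1 a true
  unfold Gam; nlinarith

include h0 h1 hq0 hq1

lemma prod_Gam_le_one (b : Fin L → Bool) : ∏ ℓ, Gam μ1 q (b ℓ) ≤ 1 :=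
  prod_le_one (fun _ _ => Gam_nonneg h0 h1 hq0 _) fun _ _ => Gam_le_one h0 h1 hq1 _

lemma isolationProb_nonneg : 0 ≤ isolationProb μ1 q n L :=
  sum_nonneg fun b _ => mul_nonneg (attrWeight_nonneg h0 h1 b)
    (pow_nonneg (sub_nonneg.2 (prod_Gam_le_one h0 h1 hq0 hq1 b)) _)

lemma integral_numIsolated :
    ∫ ω, (numIsolated q ω : ℝ) ∂magMeasure n L μ1 = n * isolationProb μ1 q n L := by
  have hsum : (fun ω : (Fin n → Fin L → Bool) × (Fin n × Fin n → ℝ) =>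
      (numIsolated q ω : ℝ)) = fun ω => ∑ u, {ω | Isolated q ω u}.indicator 1 ω := by
    ext ω
    rw [numIsolated, natCast_card_filter]
    exact sum_congr rfl fun u _ => by by_cases h : Isolated q ω u <;> simp [h]
  rw [hsum, integral_finsetSum _ fun u _ =>
    (integrable_const 1).indicator (measurableSet_isolated q u)]
  simp only [integral_indicator_one (measurableSet_isolated q _), measureReal_def,
    magMeasure_isolated h0 h1 hq0 hq1, ENNReal.toReal_ofReal (isolationProb_nonneg h0 h1 hq0 hq1),
    sum_const, card_univ, Fintype.card_fin, nsmul_eq_mul]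

lemma pow_mul_pow_le_isolationProb :
    (1 - μ1) ^ L * (1 - Gam μ1 q false ^ L) ^ (n - 1) ≤ isolationProb μ1 q n L := by
  have hterm := single_le_sum (fun b _ => mul_nonneg (attrWeight_nonneg h0 h1 b)
    (pow_nonneg (sub_nonneg.2 (prod_Gam_le_one h0 h1 hq0 hq1 b)) (n - 1)))
    (mem_univ fun _ : Fin L => false)
  simpa [isolationProb, attrWeight, bernWeight] using hterm

lemma isolationProb_le (hΓ : Gam μ1 q false ≤ Gam μ1 q true) :
    isolationProb μ1 q n L ≤ (1 - Gam μ1 q false ^ L) ^ (n - 1) := by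
  calc isolationProb μ1 q n L
      ≤ ∑ b : Fin L → Bool, attrWeight μ1 b * (1 - Gam μ1 q false ^ L) ^ (n - 1) := by
        refine sum_le_sum fun b _ => mul_le_mul_of_nonneg_left ?_ (attrWeight_nonneg h0 h1 b)
        refine pow_le_pow_left₀ (sub_nonneg.2 (prod_Gam_le_one h0 h1 hq0 hq1 b)) ?_ _
        have : Gam μ1 q false ^ L ≤ ∏ ℓ, Gam μ1 q (b ℓ) := by
          simpa using prod_le_prod (s := univ) (fun _ _ => Gam_nonneg h0 h1 hq0 false)
            fun ℓ _ => show Gam μ1 q false ≤ Gam μ1 q (b ℓ) by cases b ℓ <;> simp [hΓ]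
        linarith
    _ = (1 - Gam μ1 q false ^ L) ^ (n - 1) := by rw [← sum_mul, sum_attrWeight, one_mul]

end IsolationProb

section Limits

variable {ρ μ1 : ℝ} {q : Bool → Bool → ℝ} {L : ℕ → ℕ}

lemma Gam_pos (hq : ∀ a b, 0 < q a b) (h0 : 0 < μ1) (h1 : μ1 ≤ 1) (a : Bool) :
    0 < Gam μ1 q a := by
  have := hq a false; have := hq a true
  unfold Gam; nlinarith

lemma Admissible.tendsto_natCast_mul_isolationProb_atTop (hL : Admissible ρ L)
    (hq : ∀ a b, 0 < q a b) (hq1 : ∀ a b, q a b ≤ 1) (h0 : 0 < μ1) (h1 : μ1 < 1)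
    (hμ0 : 0 < 1 + ρ * log (1 - μ1)) (hγ : 1 + ρ * log (Gam μ1 q false) < 0) :
    Tendsto (fun n : ℕ => n * isolationProb μ1 q n (L n)) atTop atTop := by
  set γ := Gam μ1 q false
  have hγ0 : 0 < γ := Gam_pos hq h0 h1.le false
  have hγ1 : γ ≤ 1 := Gam_le_one h0.le h1.le hq1 false
  have hsmall := (hL.tendsto_natCast_mul_pow_zero hγ0 hγ).eventually_le_const one_half_pos
  refine tendsto_atTop_mono' _ ?_
    ((hL.tendsto_natCast_mul_pow_atTop (sub_pos.2 h1) hμ0).atTop_mul_const one_half_pos)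
  filter_upwards [hsmall] with n hn
  have hγL : γ ^ L n ≤ 1 := pow_le_one₀ hγ0.le hγ1
  have hhalf : 1 / 2 ≤ (1 - γ ^ L n) ^ (n - 1) := by
    linarith [one_sub_mul_le_one_sub_pow_pred (pow_nonneg hγ0.le (L n)) (by linarith) n]
  calc (n : ℝ) * (1 - μ1) ^ L n * (1 / 2)
      ≤ n * ((1 - μ1) ^ L n * (1 - γ ^ L n) ^ (n - 1)) := by rw [mul_assoc]; gcongr
    _ ≤ n * isolationProb μ1 q n (L n) := by
        gcongr
        exact pow_mul_pow_le_isolationProb h0.le h1.le (fun a b => (hq a b).le) hq1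

lemma Admissible.tendsto_natCast_mul_isolationProb_zero (hL : Admissible ρ L)
    (hq : ∀ a b, 0 < q a b) (hq1 : ∀ a b, q a b ≤ 1) (h0 : 0 < μ1) (h1 : μ1 ≤ 1)
    (hΓ : Gam μ1 q false ≤ Gam μ1 q true) (hγ : 0 < 1 + ρ * log (Gam μ1 q false)) :
    Tendsto (fun n : ℕ => n * isolationProb μ1 q n (L n)) atTop (nhds 0) := by
  set γ := Gam μ1 q false
  have hq0 : ∀ a b, 0 ≤ q a b := fun a b => (hq a b).le
  have hγ0 : 0 < γ := Gam_pos hq h0 h1 false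
  have hγ1 : γ ≤ 1 := Gam_le_one h0.le h1 hq1 false
  refine squeeze_zero (fun n => mul_nonneg n.cast_nonneg (isolationProb_nonneg h0.le h1 hq0 hq1))
    (fun n => ?_) (hL.tendsto_natCast_mul_exp_one_sub_zero hγ0 hγ)
  calc (n : ℝ) * isolationProb μ1 q n (L n) ≤ n * (1 - γ ^ L n) ^ (n - 1) := by
        gcongr; exact isolationProb_le h0.le h1 hq0 hq1 hΓ
    _ ≤ n * exp (1 - n * γ ^ L n) := by
        gcongr; exact one_sub_pow_pred_le_exp (pow_nonneg hγ0.le _) (pow_le_one₀ hγ0.le hγ1) n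

end Limits

theorem mag_zero_infinity_law_first_moment_case_pos_general
    (μ1 : ℝ) (hμ1 : 0 < μ1) (hμ1' : μ1 < 1)
    (q : Bool → Bool → ℝ) (hq : ∀ a b, 0 < q a b ∧ q a b < 1)
    (hΓ : Gam μ1 q false < Gam μ1 q true)
    (ρ : ℝ)
    (hμ0 : 1 + ρ * Real.log (1 - μ1) > 0)
    (L : ℕ → ℕ) (hL : Admissible ρ L) :
    (1 + ρ * Real.log (Gam μ1 q false) < 0 →
      Tendsto (fun n => ∫ ω, (numIsolated q ω : ℝ) ∂(magMeasure n (L n) μ1))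
        atTop atTop) ∧
    (1 + ρ * Real.log (Gam μ1 q false) > 0 →
      Tendsto (fun n => ∫ ω, (numIsolated q ω : ℝ) ∂(magMeasure n (L n) μ1))
        atTop (nhds 0)) := by
  have hqpos : ∀ a b, 0 < q a b := fun a b => (hq a b).1
  have hq1 : ∀ a b, q a b ≤ 1 := fun a b => (hq a b).2.le
  have hE : ∀ n, ∫ ω, (numIsolated q ω : ℝ) ∂(magMeasure n (L n) μ1)
      = n * isolationProb μ1 q n (L n) := fun n =>
    integral_numIsolated hμ1.le hμ1'.le (fun a b => (hqpos a b).le) hq1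
  simp only [hE]
  exact ⟨hL.tendsto_natCast_mul_isolationProb_atTop hqpos hq1 hμ1 hμ1' hμ0,
    hL.tendsto_natCast_mul_isolationProb_zero hqpos hq1 hμ1 hμ1'.le hΓ.le⟩

theorem mag_zero_infinity_law_first_moment_case_pos
    (μ1 : ℝ) (hμ1 : 0 < μ1) (hμ1' : μ1 < 1)
    (q : Bool → Bool → ℝ) (hq : ∀ a b, 0 < q a b ∧ q a b < 1)
    (hqsym : q false true = q true false)
    (hΓ : Gam μ1 q false < Gam μ1 q true)
    (ρ : ℝ) (hρ : 0 < ρ)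
    (hμ0 : 1 + ρ * Real.log (1 - μ1) > 0)
    (L : ℕ → ℕ) (hL : Admissible ρ L) :
    (1 + ρ * Real.log (Gam μ1 q false) < 0 →
      Tendsto (fun n => ∫ ω, (numIsolated q ω : ℝ) ∂(magMeasure n (L n) μ1))
        atTop atTop) ∧
    (1 + ρ * Real.log (Gam μ1 q false) > 0 →
      Tendsto (fun n => ∫ ω, (numIsolated q ω : ℝ) ∂(magMeasure n (L n) μ1))
        atTop (nhds 0)) :=
  mag_zero_infinity_law_first_moment_case_pos_general μ1 hμ1 hμ1' q hq hΓ ρ hμ0 L hL
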